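/- arXiv:2604.03138 — 7 statements merged into one kernel-verified Lean document; each statement's English description precedes it below -/
import Mathlib

section
/- Proximity of the barrier-modified minimizer (Lemma 1): Suppose θ* ∈ S. Then there exist μ* > 0, C > 0, and a map μ ↦ θ̂_μ defined for μ ∈ (0, μ*) such that for every μ ∈ (0, μ*): θ̂_μ ∈ S, θ̂_μ is a local minimizer of Ĵ_μ (in particular ∇Ĵ_μ(θ̂_μ) = 0), and ‖θ̂_μ − θ*‖ ≤ C·μ. -/
/-!
Minimize `Ĵ_μ` over a closed ball `B` around `θ*` on which `h > 0` and `log ∘ h` is `K`-Lipschitz.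
Comparing a minimizer `θ̂` with `θ*`, the quadratic growth `J θ - J θ* ≥ (λ/2)‖θ - θ*‖²` (λ > 0 the
coercivity constant of `H`) against the Lipschitz bound on the barrier gives
`(λ/2)‖θ̂ - θ*‖² ≤ μ K ‖θ̂ - θ*‖`, i.e. `‖θ̂ - θ*‖ ≤ (2K/λ) μ`. For small `μ` the minimizer is
then interior to `B`, hence a local minimizer of `Ĵ_μ`.
-/

open Real Set
open scoped RealInnerProductSpace

open Metric Filter

section Coercive

variable {E : Type*} [NormedAddCommGroup E] [InnerProductSpace ℝ E] [FiniteDimensional ℝ E]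

theorem ContinuousLinearMap.exists_pos_mul_sq_norm_le_inner_self_apply (H : E →L[ℝ] E)
    (hpos : ∀ x, x ≠ 0 → 0 < ⟪x, H x⟫) : ∃ c > 0, ∀ x, c * ‖x‖ ^ 2 ≤ ⟪x, H x⟫ := by
  cases subsingleton_or_nontrivial E with
  | inl _ => exact ⟨1, one_pos, fun x => by simp [Subsingleton.elim x 0]⟩
  | inr _ =>
    obtain ⟨u, hu, hmin⟩ := (isCompact_sphere (0 : E) 1).exists_isMinOn
      (NormedSpace.sphere_nonempty.mpr zero_le_one)
      (by fun_prop : Continuous fun x : E => ⟪x, H x⟫).continuousOn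
    have hu0 : u ≠ 0 := ne_zero_of_mem_unit_sphere ⟨u, hu⟩
    refine ⟨⟪u, H u⟫, hpos u hu0, fun x => ?_⟩
    rcases eq_or_ne x 0 with rfl | hx
    · simp
    have hnx : 0 < ‖x‖ := norm_pos_iff.mpr hx
    have hmem : ‖x‖⁻¹ • x ∈ sphere (0 : E) 1 := by
      simp [norm_smul, hnx.ne']
    have hle : ⟪u, H u⟫ ≤ ⟪‖x‖⁻¹ • x, H (‖x‖⁻¹ • x)⟫ := hmin hmem
    rw [map_smul, real_inner_smul_left, real_inner_smul_right] at hle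
    calc ⟪u, H u⟫ * ‖x‖ ^ 2 ≤ ‖x‖⁻¹ * (‖x‖⁻¹ * ⟪x, H x⟫) * ‖x‖ ^ 2 := by gcongr
      _ = ⟪x, H x⟫ := by field_simp

end Coercive

theorem le_div_of_mul_sq_le_mul {c d m : ℝ} (hc : 0 < c) (hd : 0 ≤ d) (hm : 0 ≤ m)
    (h : c * d ^ 2 ≤ m * d) : d ≤ m / c := by
  rcases hd.eq_or_lt with rfl | hd
  · exact div_nonneg hm hc.le
  · rw [le_div_iff₀ hc]
    nlinarith

section PenalizedMinimizer

variable {α : Type*} [PseudoMetricSpace α] {f g : α → ℝ} {s : Set α} {x₀ a : α} {c μ : ℝ}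
  {K : NNReal}

theorem dist_le_of_isMinOn_sub_mul (hc : 0 < c) (hμ : 0 ≤ μ)
    (hf : ∀ x ∈ s, c * dist x x₀ ^ 2 ≤ f x - f x₀) (hg : LipschitzOnWith K g s)
    (hx₀ : x₀ ∈ s) (ha : a ∈ s) (hmin : IsMinOn (fun x => f x - μ * g x) s a) :
    dist a x₀ ≤ μ * K / c := by
  refine le_div_of_mul_sq_le_mul hc dist_nonneg (by positivity) ?_
  have hcmp : f a - μ * g a ≤ f x₀ - μ * g x₀ := hmin hx₀
  have hlip : g a - g x₀ ≤ K * dist a x₀ :=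
    (le_abs_self _).trans (by simpa [Real.dist_eq] using hg.dist_le_mul a ha x₀ hx₀)
  calc c * dist a x₀ ^ 2 ≤ f a - f x₀ := hf a ha
    _ ≤ μ * (g a - g x₀) := by linarith
    _ ≤ μ * (K * dist a x₀) := by gcongr
    _ = μ * K * dist a x₀ := by ring

variable [ProperSpace α]

theorem exists_isLocalMin_sub_mul_of_quadratic_growth {r : ℝ} (hc : 0 < c) (hr : 0 < r)
    (hf : ∀ x ∈ closedBall x₀ r, c * dist x x₀ ^ 2 ≤ f x - f x₀)
    (hfc : ContinuousOn f (closedBall x₀ r)) (hg : LipschitzOnWith K g (closedBall x₀ r)) :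
    ∃ μstar > 0, ∃ C > 0, ∃ xhat : ℝ → α, ∀ μ ∈ Ioo 0 μstar,
      xhat μ ∈ closedBall x₀ r ∧ IsLocalMin (fun x => f x - μ * g x) (xhat μ) ∧
        dist (xhat μ) x₀ ≤ C * μ := by
  have hx₀ : x₀ ∈ closedBall x₀ r := mem_closedBall_self hr.le
  have hmin : ∀ μ : ℝ, ∃ a ∈ closedBall x₀ r,
      IsMinOn (fun x => f x - μ * g x) (closedBall x₀ r) a :=
    fun μ => (isCompact_closedBall x₀ r).exists_isMinOn ⟨x₀, hx₀⟩
      (hfc.sub (continuousOn_const.mul hg.continuousOn))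
  choose xhat hxhat_mem hxhat_min using hmin
  set C : ℝ := K / c + 1
  have hC : 0 < C := by positivity
  refine ⟨r / C, by positivity, C, hC, xhat, fun μ ⟨hμ, hμr⟩ => ?_⟩
  have hdist : dist (xhat μ) x₀ ≤ C * μ :=
    calc dist (xhat μ) x₀ ≤ μ * K / c :=
          dist_le_of_isMinOn_sub_mul hc hμ.le hf hg hx₀ (hxhat_mem μ) (hxhat_min μ)
      _ ≤ C * μ := by rw [mul_div_assoc, mul_comm]; gcongr; linarith
  have hlt : dist (xhat μ) x₀ < r := hdist.trans_lt (by rwa [lt_div_iff₀' hC] at hμr)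
  exact ⟨hxhat_mem μ, (hxhat_min μ).isLocalMin (closedBall_mem_nhds_of_mem hlt), hdist⟩

end PenalizedMinimizer

theorem proximity_of_modified_minimizer_general
    {n : ℕ}
    (Jstar : ℝ) (θs : EuclideanSpace ℝ (Fin n))
    (H : EuclideanSpace ℝ (Fin n) →L[ℝ] EuclideanSpace ℝ (Fin n))
    (Hpos : ∀ x : EuclideanSpace ℝ (Fin n), x ≠ 0 → 0 < ⟪x, H x⟫)
    (J : EuclideanSpace ℝ (Fin n) → ℝ)
    (hJdef : ∀ θ, J θ = Jstar + (1 / 2) * ⟪θ - θs, H (θ - θs)⟫)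
    (h : EuclideanSpace ℝ (Fin n) → ℝ) (hh : ContDiff ℝ 2 h)
    (S : Set (EuclideanSpace ℝ (Fin n))) (hSdef : S = {θ | 0 < h θ})
    (Jhat : ℝ → EuclideanSpace ℝ (Fin n) → ℝ)
    (hJhatdef : ∀ μ θ, Jhat μ θ = J θ - μ * Real.log (h θ))
    (hθsS : θs ∈ S) :
    ∃ μstar > 0, ∃ C > 0, ∃ θhat : ℝ → EuclideanSpace ℝ (Fin n),
      ∀ μ ∈ Set.Ioo 0 μstar,
        θhat μ ∈ S ∧ IsLocalMin (Jhat μ) (θhat μ) ∧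
        gradient (Jhat μ) (θhat μ) = 0 ∧ ‖θhat μ - θs‖ ≤ C * μ := by
  subst hSdef
  obtain ⟨c, hc, hcH⟩ := H.exists_pos_mul_sq_norm_le_inner_self_apply Hpos
  have hgrowth : ∀ θ, c / 2 * dist θ θs ^ 2 ≤ J θ - J θs := fun θ => by
    simp only [hJdef, sub_self, map_zero, inner_zero_right, dist_eq_norm]
    linarith [hcH (θ - θs)]
  obtain ⟨K, t, ht, hK⟩ := ((Real.contDiffAt_log.mpr (ne_of_gt hθsS)).comp θs
    (hh.contDiffAt.of_le one_le_two)).exists_lipschitzOnWith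
  obtain ⟨r, hr, hball⟩ := nhds_basis_closedBall.mem_iff.mp
    (inter_mem ht ((isOpen_lt continuous_const hh.continuous).mem_nhds hθsS))
  obtain ⟨μstar, hμstar, C, hC, θhat, hθhat⟩ := exists_isLocalMin_sub_mul_of_quadratic_growth
    (half_pos hc) hr (fun θ _ => hgrowth θ) (by rw [show J = _ from funext hJdef]; fun_prop)
    (hK.mono fun θ hθ => (hball hθ).1)
  refine ⟨μstar, hμstar, C, hC, θhat, fun μ hμ => ?_⟩
  obtain ⟨hmem, hloc, hdist⟩ := hθhat μ hμ
  have hJhat_min : IsLocalMin (Jhat μ) (θhat μ) := by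
    rw [show Jhat μ = _ from funext (hJhatdef μ)]
    exact hloc
  exact ⟨(hball hmem).2, hJhat_min, by simp [gradient, hJhat_min.fderiv_eq_zero],
    by rwa [← dist_eq_norm]⟩

theorem proximity_of_modified_minimizer
    {n : ℕ} (hn : 1 ≤ n)
    (Jstar : ℝ) (θs : EuclideanSpace ℝ (Fin n))
    (H : EuclideanSpace ℝ (Fin n) →L[ℝ] EuclideanSpace ℝ (Fin n))
    (Hsymm : ∀ x y : EuclideanSpace ℝ (Fin n), ⟪H x, y⟫ = ⟪x, H y⟫)
    (Hpos : ∀ x : EuclideanSpace ℝ (Fin n), x ≠ 0 → 0 < ⟪x, H x⟫)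
    (J : EuclideanSpace ℝ (Fin n) → ℝ)
    (hJdef : ∀ θ, J θ = Jstar + (1 / 2) * ⟪θ - θs, H (θ - θs)⟫)
    (h : EuclideanSpace ℝ (Fin n) → ℝ) (hh : ContDiff ℝ 2 h)
    (S : Set (EuclideanSpace ℝ (Fin n))) (hSdef : S = {θ | 0 < h θ})
    (hSne : S.Nonempty)
    (hbdry : IsCompact (frontier S))
    (hgradne : ∀ θ ∈ frontier S, gradient h θ ≠ 0)
    (hsub : ∀ c : ℝ, IsCompact {θ | h θ ≤ c})
    (Jhat : ℝ → EuclideanSpace ℝ (Fin n) → ℝ)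
    (hJhatdef : ∀ μ θ, Jhat μ θ = J θ - μ * Real.log (h θ))
    (hθsS : θs ∈ S) :
    ∃ μstar > 0, ∃ C > 0, ∃ θhat : ℝ → EuclideanSpace ℝ (Fin n),
      ∀ μ ∈ Set.Ioo 0 μstar,
        θhat μ ∈ S ∧ IsLocalMin (Jhat μ) (θhat μ) ∧
        gradient (Jhat μ) (θhat μ) = 0 ∧ ‖θhat μ - θs‖ ≤ C * μ :=
  proximity_of_modified_minimizer_general Jstar θs H Hpos J hJdef h hh S hSdef Jhat hJhatdef hθsS
end

section
/- Local strong convexity of the modified cost near the unconstrained minimizer: Suppose θ* ∈ S and let λ_min(H) > 0 denote the smallest eigenvalue of H. Then there exist r > 0 and μ* > 0 such that the closed ball of radius r around θ* is contained in S and for every μ ∈ (0, μ*) and every θ with ‖θ − θ*‖ ≤ r, the Hessian satisfies ∇²Ĵ_μ(θ) ⪰ (λ_min(H)/2)·I, i.e., ⟨v, ∇²Ĵ_μ(θ) v⟩ ≥ (λ_min(H)/2)·‖v‖² for all v ∈ ℝⁿ. -/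
/-!
On `S` the Hessian of `Ĵ_μ` is `H - μ ∇²(log h)`. A closed ball around `θ*` lies in the open
set `S`, so by compactness `‖∇²(log h)‖ ≤ C` on it; for `μ < λ / (2C)` the barrier term then
costs at most `λ/2` of the lower bound `λ‖v‖²` supplied by `H`.
-/

open Real Set
open scoped RealInnerProductSpace

open Filter Topology

variable {E : Type*} [NormedAddCommGroup E] [InnerProductSpace ℝ E]

theorem IsCompact.exists_pos_bound_of_continuousOn {X F : Type*} [TopologicalSpace X]
    [SeminormedAddCommGroup F] {K : Set X} {f : X → F} (hK : IsCompact K)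
    (hf : ContinuousOn f K) : ∃ C > 0, ∀ x ∈ K, ‖f x‖ ≤ C := by
  obtain ⟨C, hC⟩ := hK.exists_bound_of_continuousOn hf
  exact ⟨max C 1, by positivity, fun x hx => (hC x hx).trans (le_max_left C 1)⟩

theorem ContinuousLinearMap.inner_apply_self_le_opNorm_mul_sq (A : E →L[ℝ] E) (v : E) :
    ⟪v, A v⟫ ≤ ‖A‖ * ‖v‖ ^ 2 :=
  calc ⟪v, A v⟫ ≤ ‖v‖ * ‖A v‖ := real_inner_le_norm v (A v)
    _ ≤ ‖v‖ * (‖A‖ * ‖v‖) := by gcongr; exact A.le_opNorm v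
    _ = ‖A‖ * ‖v‖ ^ 2 := by ring

theorem le_inner_sub_smul_apply {H A : E →L[ℝ] E} {lam C μ : ℝ}
    (hH : ∀ v, lam * ‖v‖ ^ 2 ≤ ⟪v, H v⟫) (hA : ‖A‖ ≤ C) (hμ : 0 ≤ μ) (v : E) :
    (lam - μ * C) * ‖v‖ ^ 2 ≤ ⟪v, (H - μ • A) v⟫ := by
  have hAv : μ * ⟪v, A v⟫ ≤ μ * (C * ‖v‖ ^ 2) := by
    gcongr
    exact (A.inner_apply_self_le_opNorm_mul_sq v).trans (by gcongr)
  rw [sub_apply, smul_apply, inner_sub_right, real_inner_smul_right]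
  nlinarith [hH v]

variable [CompleteSpace E]

theorem LinearMap.IsSymmetric.hasGradientAt_quadratic {H : E →L[ℝ] E}
    (hH : (H : E →ₗ[ℝ] E).IsSymmetric) (c : ℝ) (a x : E) :
    HasGradientAt (fun θ => c + (1 / 2) * ⟪θ - a, H (θ - a)⟫) (H (x - a)) x := by
  have hq : HasFDerivAt (fun θ => c + (1 / 2 : ℝ) * H.reApplyInnerSelf (θ - a))
      ((1 / 2 : ℝ) • (2 • innerSL ℝ (H (x - a))).comp (ContinuousLinearMap.id ℝ E)) x :=
    (((hH.hasStrictFDerivAt_reApplyInnerSelf (x - a)).hasFDerivAt.comp x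
      ((hasFDerivAt_id x).sub_const a)).const_mul (1 / 2)).const_add c
  have hfun : (fun θ => c + (1 / 2) * ⟪θ - a, H (θ - a)⟫)
      = fun θ => c + (1 / 2 : ℝ) * H.reApplyInnerSelf (θ - a) := by
    funext θ
    rw [ContinuousLinearMap.reApplyInnerSelf_apply, real_inner_comm]
    rfl
  rw [hasGradientAt_iff_hasFDerivAt, hfun]
  refine hq.congr_fderiv ?_
  ext v
  simp

theorem gradient_sub_const_mul {f g : E → ℝ} {x : E} (hf : DifferentiableAt ℝ f x)
    (hg : DifferentiableAt ℝ g x) (μ : ℝ) :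
    gradient (fun y => f y - μ * g y) x = gradient f x - μ • gradient g x := by
  simp only [gradient, fderiv_fun_sub hf (hg.const_mul μ), fderiv_const_mul hg, map_sub, map_smul]

theorem ContDiffOn.gradient_of_isOpen {f : E → ℝ} {s : Set E} {m n : WithTop ℕ∞}
    (hf : ContDiffOn ℝ n f s) (hs : IsOpen s) (hmn : m + 1 ≤ n) :
    ContDiffOn ℝ m (gradient f) s :=
  (InnerProductSpace.toDual ℝ E).symm.contDiff.comp_contDiffOn (hf.fderiv_of_isOpen hs hmn)

theorem fderiv_gradient_sub_const_mul {f g : E → ℝ} {x : E}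
    (hf : ∀ᶠ y in 𝓝 x, DifferentiableAt ℝ f y) (hg : ∀ᶠ y in 𝓝 x, DifferentiableAt ℝ g y)
    (hf' : DifferentiableAt ℝ (gradient f) x) (hg' : DifferentiableAt ℝ (gradient g) x)
    (μ : ℝ) :
    fderiv ℝ (gradient fun y => f y - μ * g y) x
      = fderiv ℝ (gradient f) x - μ • fderiv ℝ (gradient g) x := by
  have hgrad : gradient (fun y => f y - μ * g y) =ᶠ[𝓝 x] fun y => gradient f y - μ • gradient g y := by
    filter_upwards [hf, hg] with y hfy hgy using gradient_sub_const_mul hfy hgy μ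
  rw [hgrad.fderiv_eq]
  exact (hf'.hasFDerivAt.sub (hg'.hasFDerivAt.const_smul μ)).fderiv

theorem LinearMap.IsSymmetric.fderiv_gradient_quadratic_sub_const_mul {H : E →L[ℝ] E}
    (hH : (H : E →ₗ[ℝ] E).IsSymmetric) (c : ℝ) (a : E) {g : E → ℝ} {s : Set E}
    (hs : IsOpen s) (hg : ContDiffOn ℝ 2 g s) {x : E} (hx : x ∈ s) (μ : ℝ) :
    fderiv ℝ (gradient fun y => (c + (1 / 2) * ⟪y - a, H (y - a)⟫) - μ * g y) x
      = H - μ • fderiv ℝ (gradient g) x := by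
  have hq := hH.hasGradientAt_quadratic c a
  have hq' : HasFDerivAt (fun y => H (y - a)) H x :=
    H.hasFDerivAt.comp x ((hasFDerivAt_id x).sub_const a)
  have hg_diff : ∀ᶠ y in 𝓝 x, DifferentiableAt ℝ g y :=
    eventually_of_mem (hs.mem_nhds hx) fun y hy =>
      (hg.differentiableOn two_ne_zero y hy).differentiableAt (hs.mem_nhds hy)
  have hg' : DifferentiableAt ℝ (gradient g) x :=
    ((hg.gradient_of_isOpen hs le_rfl).differentiableOn one_ne_zero x hx).differentiableAt
      (hs.mem_nhds hx)
  rw [fderiv_gradient_sub_const_mul (.of_forall fun y => (hq y).differentiableAt) hg_diff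
    (gradient_eq hq ▸ hq'.differentiableAt) hg' μ, gradient_eq hq, hq'.fderiv]

theorem local_strong_convexity_general
    {n : ℕ}
    (Jstar : ℝ) (θs : EuclideanSpace ℝ (Fin n))
    (H : EuclideanSpace ℝ (Fin n) →L[ℝ] EuclideanSpace ℝ (Fin n))
    (Hsymm : ∀ x y : EuclideanSpace ℝ (Fin n), ⟪H x, y⟫ = ⟪x, H y⟫)
    (J : EuclideanSpace ℝ (Fin n) → ℝ)
    (hJdef : ∀ θ, J θ = Jstar + (1 / 2) * ⟪θ - θs, H (θ - θs)⟫)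
    (h : EuclideanSpace ℝ (Fin n) → ℝ) (hh : ContDiff ℝ 2 h)
    (S : Set (EuclideanSpace ℝ (Fin n))) (hSdef : S = {θ | 0 < h θ})
    (Jhat : ℝ → EuclideanSpace ℝ (Fin n) → ℝ)
    (hJhatdef : ∀ μ θ, Jhat μ θ = J θ - μ * Real.log (h θ))
    (lam : ℝ) (hlam_pos : 0 < lam)
    (hlam_lb : ∀ v : EuclideanSpace ℝ (Fin n), lam * ‖v‖ ^ 2 ≤ ⟪v, H v⟫)
    (hθsS : θs ∈ S) :
    ∃ rad > 0, ∃ μstar > 0, Metric.closedBall θs rad ⊆ S ∧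
      ∀ μ ∈ Set.Ioo 0 μstar, ∀ θ : EuclideanSpace ℝ (Fin n), ‖θ - θs‖ ≤ rad →
        ∀ v, (lam / 2) * ‖v‖ ^ 2 ≤ ⟪v, fderiv ℝ (gradient (Jhat μ)) θ v⟫ := by
  have hS : IsOpen S := hSdef ▸ isOpen_lt continuous_const hh.continuous
  have hbarrier : ContDiffOn ℝ 2 (fun θ => log (h θ)) S :=
    hh.contDiffOn.log fun θ hθ => (hSdef ▸ hθ : θ ∈ {θ | 0 < h θ}).ne'
  obtain ⟨rad, hrad, hball⟩ := Metric.nhds_basis_closedBall.mem_iff.1 (hS.mem_nhds hθsS)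
  obtain ⟨C, hC, hbound⟩ := (isCompact_closedBall θs rad).exists_pos_bound_of_continuousOn
    (((hbarrier.gradient_of_isOpen hS le_rfl).continuousOn_fderiv_of_isOpen hS le_rfl).mono hball)
  refine ⟨rad, hrad, lam / (2 * C), by positivity, hball, fun μ hμ θ hθ v => ?_⟩
  have hθball : θ ∈ Metric.closedBall θs rad := mem_closedBall_iff_norm.2 hθ
  have hJhat : Jhat μ = fun θ => (Jstar + (1 / 2) * ⟪θ - θs, H (θ - θs)⟫) - μ * log (h θ) := by
    funext θ
    rw [hJhatdef, hJdef]
  have hμC : μ * (2 * C) < lam := (lt_div_iff₀ (by positivity)).1 hμ.2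
  rw [hJhat, LinearMap.IsSymmetric.fderiv_gradient_quadratic_sub_const_mul Hsymm Jstar θs hS
    hbarrier (hball hθball) μ]
  calc lam / 2 * ‖v‖ ^ 2 ≤ (lam - μ * C) * ‖v‖ ^ 2 := by gcongr; linarith
    _ ≤ _ := le_inner_sub_smul_apply hlam_lb (hbound θ hθball) hμ.1.le v

theorem local_strong_convexity
    {n : ℕ} (hn : 1 ≤ n)
    (Jstar : ℝ) (θs : EuclideanSpace ℝ (Fin n))
    (H : EuclideanSpace ℝ (Fin n) →L[ℝ] EuclideanSpace ℝ (Fin n))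
    (Hsymm : ∀ x y : EuclideanSpace ℝ (Fin n), ⟪H x, y⟫ = ⟪x, H y⟫)
    (Hpos : ∀ x : EuclideanSpace ℝ (Fin n), x ≠ 0 → 0 < ⟪x, H x⟫)
    (J : EuclideanSpace ℝ (Fin n) → ℝ)
    (hJdef : ∀ θ, J θ = Jstar + (1 / 2) * ⟪θ - θs, H (θ - θs)⟫)
    (h : EuclideanSpace ℝ (Fin n) → ℝ) (hh : ContDiff ℝ 2 h)
    (S : Set (EuclideanSpace ℝ (Fin n))) (hSdef : S = {θ | 0 < h θ})
    (hSne : S.Nonempty)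
    (Jhat : ℝ → EuclideanSpace ℝ (Fin n) → ℝ)
    (hJhatdef : ∀ μ θ, Jhat μ θ = J θ - μ * Real.log (h θ))
    (lam : ℝ) (hlam_pos : 0 < lam)
    (hlam_lb : ∀ v : EuclideanSpace ℝ (Fin n), lam * ‖v‖ ^ 2 ≤ ⟪v, H v⟫)
    (hlam_eig : ∃ v : EuclideanSpace ℝ (Fin n), v ≠ 0 ∧ ⟪v, H v⟫ = lam * ‖v‖ ^ 2)
    (hθsS : θs ∈ S) :
    ∃ rad > 0, ∃ μstar > 0, Metric.closedBall θs rad ⊆ S ∧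
      ∀ μ ∈ Set.Ioo 0 μstar, ∀ θ : EuclideanSpace ℝ (Fin n), ‖θ - θs‖ ≤ rad →
        ∀ v, (lam / 2) * ‖v‖ ^ 2 ≤ ⟪v, fderiv ℝ (gradient (Jhat μ)) θ v⟫ :=
  local_strong_convexity_general Jstar θs H Hsymm J hJdef h hh S hSdef Jhat hJhatdef lam hlam_pos
    hlam_lb hθsS
end

section
/- The barrier pushes the equilibrium deeper into the safe set: Suppose θ* ∈ S and ∇h(θ*) ≠ 0, and let μ ↦ θ̂_μ be a continuously differentiable curve defined on [0, μ*) with θ̂_0 = θ*, θ̂_μ ∈ S, and ∇Ĵ_μ(θ̂_μ) = 0 for all μ ∈ (0, μ*). Then there exists μ** ∈ (0, μ*] such that for every μ ∈ (0, μ**), h(θ̂_μ) > h(θ*). -/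
/-!
Write `d = θ̂ - θ*`. Pairing the first-order condition `∇Ĵ_μ(θ̂) = 0` with `d` gives
`μ ⟪∇h(θ̂), d⟫ = h(θ̂) ⟪d, H d⟫ ≥ h(θ̂) κ ‖d‖²`, where `κ > 0` is the coercivity constant of `H`;
and `d ≠ 0`, since at `θ̂ = θ*` the condition would force `∇h(θ*) = 0`. As `∇h` is locally
Lipschitz, `h(θ*) ≤ h(θ̂) - ⟪∇h(θ̂), d⟫ + K ‖d‖²`, which is `< h(θ̂)` as soon as `μ K < h(θ̂) κ`.
For small `μ` the curve stays in the ball where the Lipschitz bound holds and `h(θ̂) > h(θ*) / 2`.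
-/

open Real Set
open scoped RealInnerProductSpace

open Filter Metric
open scoped Topology

section

variable {E F : Type*} [NormedAddCommGroup E] [NormedSpace ℝ E]
  [NormedAddCommGroup F] [NormedSpace ℝ F]

theorem ContDiffAt.exists_ball_norm_sub_sub_fderiv_le {f : E → F} {a : E}
    (hf : ContDiffAt ℝ 2 f a) :
    ∃ K : ℝ, ∃ r > 0, ∀ x ∈ ball a r, ∀ y ∈ ball a r,
      ‖f y - f x - fderiv ℝ f x (y - x)‖ ≤ K * ‖y - x‖ ^ 2 := by
  obtain ⟨K, t, ht, hK⟩ := (hf.fderiv_right (m := 1) le_rfl).exists_lipschitzOnWith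
  have hdiff : ∀ᶠ z in 𝓝 a, DifferentiableAt ℝ f z :=
    (hf.eventually (by simp)).mono fun z hz => hz.differentiableAt (by simp)
  obtain ⟨r, hr, hball⟩ := Metric.mem_nhds_iff.1 (inter_mem ht hdiff)
  refine ⟨K, r, hr, fun x hx y hy => ?_⟩
  have hseg : segment ℝ x y ⊆ t ∩ {z | DifferentiableAt ℝ f z} :=
    ((convex_ball a r).segment_subset hx hy).trans hball
  have hxt : x ∈ t := (hseg (left_mem_segment ℝ x y)).1
  calc ‖f y - f x - fderiv ℝ f x (y - x)‖ ≤ K * ‖y - x‖ * ‖y - x‖ :=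
        (convex_segment x y).norm_image_sub_le_of_norm_fderiv_le'
          (fun z hz => (hseg hz).2)
          (fun z hz => (hK.norm_sub_le (hseg hz).1 hxt).trans
            (by gcongr; exact norm_sub_le_of_mem_segment hz))
          (left_mem_segment ℝ x y) (right_mem_segment ℝ x y)
    _ = K * ‖y - x‖ ^ 2 := by ring

end

section

variable {E : Type*} [NormedAddCommGroup E] [InnerProductSpace ℝ E]

theorem exists_pos_mul_norm_sq_le_inner_apply_self [FiniteDimensional ℝ E] (H : E →L[ℝ] E)
    (hpos : ∀ x, x ≠ 0 → 0 < ⟪x, H x⟫) : ∃ κ > 0, ∀ x, κ * ‖x‖ ^ 2 ≤ ⟪x, H x⟫ := by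
  rcases subsingleton_or_nontrivial E with hE | hE
  · exact ⟨1, one_pos, fun x => by simp [Subsingleton.elim x 0]⟩
  obtain ⟨u, hu, hmin⟩ := (isCompact_sphere (0 : E) 1).exists_isMinOn
    (NormedSpace.sphere_nonempty.2 zero_le_one)
    (by fun_prop : Continuous fun x => ⟪x, H x⟫).continuousOn
  refine ⟨⟪u, H u⟫, hpos u (ne_zero_of_mem_unit_sphere ⟨u, hu⟩), fun x => ?_⟩
  rcases eq_or_ne x 0 with rfl | hx
  · simp
  have hunit : ‖x‖⁻¹ • x ∈ sphere (0 : E) 1 := by simp [norm_smul, hx]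
  have hle := isMinOn_iff.1 hmin _ hunit
  simp only [map_smul, real_inner_smul_left, real_inner_smul_right] at hle
  calc ⟪u, H u⟫ * ‖x‖ ^ 2 ≤ ‖x‖⁻¹ * (‖x‖⁻¹ * ⟪x, H x⟫) * ‖x‖ ^ 2 := by gcongr
    _ = ⟪x, H x⟫ := by field_simp

noncomputable def barrierCost (c : ℝ) (a : E) (H : E →L[ℝ] E) (g : E → ℝ) (μ : ℝ) (x : E) : ℝ :=
  c + 1 / 2 * ⟪x - a, H (x - a)⟫ - μ * Real.log (g x)

variable {c μ K κ : ℝ} {a x : E} {H : E →L[ℝ] E} {g : E → ℝ}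

theorem mul_fderiv_eq_of_fderiv_barrierCost_eq_zero (hg : DifferentiableAt ℝ g x) (hgx : 0 < g x)
    (hcrit : fderiv ℝ (barrierCost c a H g μ) x = 0) (v : E) :
    μ * fderiv ℝ g x v = g x * (1 / 2 * (⟪v, H (x - a)⟫ + ⟪x - a, H v⟫)) := by
  have hsub := (hasFDerivAt_id (𝕜 := ℝ) x).sub_const a
  have hderiv := (((hsub.inner ℝ (H.hasFDerivAt.comp x hsub)).const_mul (1 / 2)).const_add
    c).sub ((hg.hasFDerivAt.log hgx.ne').const_mul μ)
  have hv := DFunLike.congr_fun (hderiv.fderiv.symm.trans hcrit) v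
  simp only [one_div, id_eq, Function.comp_apply, map_sub, ContinuousLinearMap.comp_id, sub_apply,
    smul_apply, ContinuousLinearMap.comp_apply, ContinuousLinearMap.prod_apply,
    ContinuousLinearMap.id_apply, fderivInnerCLM_apply, smul_eq_mul, zero_apply] at hv
  rw [map_sub, show 1 / 2 * (⟪v, H x - H a⟫ + ⟪x - a, H v⟫) = μ * ((g x)⁻¹ * fderiv ℝ g x v) by
    linarith]
  field_simp

theorem ne_of_fderiv_barrierCost_eq_zero (hμ : μ ≠ 0) (hg : DifferentiableAt ℝ g x) (hgx : 0 < g x)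
    (hcrit : fderiv ℝ (barrierCost c a H g μ) x = 0) (ha : fderiv ℝ g a ≠ 0) : x ≠ a := by
  rintro rfl
  refine ha (ContinuousLinearMap.ext fun v => ?_)
  simpa [hμ] using mul_fderiv_eq_of_fderiv_barrierCost_eq_zero hg hgx hcrit v

theorem lt_of_fderiv_barrierCost_eq_zero (hH : ∀ v, κ * ‖v‖ ^ 2 ≤ ⟪v, H v⟫) (hμ : 0 < μ)
    (hg : DifferentiableAt ℝ g x) (hgx : 0 < g x)
    (hcrit : fderiv ℝ (barrierCost c a H g μ) x = 0) (ha : fderiv ℝ g a ≠ 0)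
    (hK : g a - g x - fderiv ℝ g x (a - x) ≤ K * ‖a - x‖ ^ 2) (hsmall : μ * K < g x * κ) :
    g a < g x := by
  have hd : 0 < ‖x - a‖ :=
    norm_pos_iff.2 (sub_ne_zero.2 (ne_of_fderiv_barrierCost_eq_zero hμ.ne' hg hgx hcrit ha))
  have hbalance : μ * fderiv ℝ g x (x - a) = g x * ⟪x - a, H (x - a)⟫ := by
    rw [mul_fderiv_eq_of_fderiv_barrierCost_eq_zero hg hgx hcrit]; ring
  have hslope : K * ‖x - a‖ ^ 2 < fderiv ℝ g x (x - a) := by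
    refine lt_of_mul_lt_mul_left ?_ hμ.le
    calc μ * (K * ‖x - a‖ ^ 2) = μ * K * ‖x - a‖ ^ 2 := by ring
      _ < g x * κ * ‖x - a‖ ^ 2 := by gcongr
      _ ≤ g x * ⟪x - a, H (x - a)⟫ := by rw [mul_assoc]; gcongr; exact hH _
      _ = μ * fderiv ℝ g x (x - a) := hbalance.symm
  rw [← neg_sub x a, map_neg, norm_neg] at hK
  linarith

end

theorem barrier_pushes_equilibrium_inward_general
    {n : ℕ}
    (Jstar : ℝ) (θs : EuclideanSpace ℝ (Fin n))
    (H : EuclideanSpace ℝ (Fin n) →L[ℝ] EuclideanSpace ℝ (Fin n))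
    (Hpos : ∀ x : EuclideanSpace ℝ (Fin n), x ≠ 0 → 0 < ⟪x, H x⟫)
    (J : EuclideanSpace ℝ (Fin n) → ℝ)
    (hJdef : ∀ θ, J θ = Jstar + (1 / 2) * ⟪θ - θs, H (θ - θs)⟫)
    (h : EuclideanSpace ℝ (Fin n) → ℝ) (hh : ContDiff ℝ 2 h)
    (S : Set (EuclideanSpace ℝ (Fin n))) (hSdef : S = {θ | 0 < h θ})
    (Jhat : ℝ → EuclideanSpace ℝ (Fin n) → ℝ)
    (hJhatdef : ∀ μ θ, Jhat μ θ = J θ - μ * Real.log (h θ))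
    (hθsS : θs ∈ S) (hgθs : gradient h θs ≠ 0)
    (μstar : ℝ) (hμstar : 0 < μstar)
    (θhat : ℝ → EuclideanSpace ℝ (Fin n))
    (hC1 : ContDiffOn ℝ 1 θhat (Set.Ico 0 μstar))
    (h0 : θhat 0 = θs)
    (hmem : ∀ μ ∈ Set.Ioo 0 μstar, θhat μ ∈ S)
    (hcrit : ∀ μ ∈ Set.Ioo 0 μstar, gradient (Jhat μ) (θhat μ) = 0) :
    ∃ μss, 0 < μss ∧ μss ≤ μstar ∧ ∀ μ ∈ Set.Ioo 0 μss, h θs < h (θhat μ) := by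
  subst hSdef
  have hθs : 0 < h θs := hθsS
  have hJhat : ∀ μ, Jhat μ = barrierCost Jstar θs H h μ := fun μ =>
    funext fun θ => by rw [hJhatdef, hJdef, barrierCost]
  obtain ⟨κ, hκ, hcoer⟩ := exists_pos_mul_norm_sq_le_inner_apply_self H Hpos
  obtain ⟨K, r, hr, htaylor⟩ := hh.contDiffAt.exists_ball_norm_sub_sub_fderiv_le (a := θs)
  have hθhat : Tendsto θhat (𝓝[>] 0) (𝓝 θs) := by
    rw [← h0, ← nhdsWithin_Ioo_eq_nhdsGT hμstar]
    exact (hC1.continuousOn 0 ⟨le_rfl, hμstar⟩).mono Ioo_subset_Ico_self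
  have hsmall : Tendsto (fun μ : ℝ => μ * K) (𝓝[>] 0) (𝓝 0) := by
    simpa using ((continuous_mul_const K).tendsto 0).mono_left nhdsWithin_le_nhds
  have hev : ∀ᶠ μ in 𝓝[>] 0, μ ∈ Ioo 0 μstar ∧ θhat μ ∈ ball θs r ∧
      h θs / 2 < h (θhat μ) ∧ μ * K < h θs / 2 * κ := by
    filter_upwards [Ioo_mem_nhdsGT hμstar, hθhat (ball_mem_nhds θs hr),
      (hh.continuous.tendsto θs).comp hθhat (Ioi_mem_nhds (half_lt_self hθs)),
      hsmall.eventually_lt_const (by positivity : 0 < h θs / 2 * κ)] with μ h1 h2 h3 h4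
    exact ⟨h1, h2, h3, h4⟩
  obtain ⟨ε, hε, hεsub⟩ := mem_nhdsGT_iff_exists_Ioo_subset.1 hev
  refine ⟨min ε μstar, lt_min hε hμstar, min_le_right _ _, fun μ hμ => ?_⟩
  obtain ⟨hμ, hball, hhalf, hμK⟩ := hεsub ⟨hμ.1, hμ.2.trans_le (min_le_left _ _)⟩
  have hθμ : 0 < h (θhat μ) := hmem μ hμ
  refine lt_of_fderiv_barrierCost_eq_zero (c := Jstar) hcoer hμ.1 (hh.differentiable (by simp) _)
    hθμ ?_ ?_ ?_ (hμK.trans (by gcongr))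
  · simpa [gradient, hJhat] using hcrit μ hμ
  · simpa [gradient] using hgθs
  · exact (Real.norm_eq_abs _ ▸ le_abs_self _).trans (htaylor _ hball _ (mem_ball_self hr))

theorem barrier_pushes_equilibrium_inward
    {n : ℕ} (hn : 1 ≤ n)
    (Jstar : ℝ) (θs : EuclideanSpace ℝ (Fin n))
    (H : EuclideanSpace ℝ (Fin n) →L[ℝ] EuclideanSpace ℝ (Fin n))
    (Hsymm : ∀ x y : EuclideanSpace ℝ (Fin n), ⟪H x, y⟫ = ⟪x, H y⟫)
    (Hpos : ∀ x : EuclideanSpace ℝ (Fin n), x ≠ 0 → 0 < ⟪x, H x⟫)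
    (J : EuclideanSpace ℝ (Fin n) → ℝ)
    (hJdef : ∀ θ, J θ = Jstar + (1 / 2) * ⟪θ - θs, H (θ - θs)⟫)
    (h : EuclideanSpace ℝ (Fin n) → ℝ) (hh : ContDiff ℝ 2 h)
    (S : Set (EuclideanSpace ℝ (Fin n))) (hSdef : S = {θ | 0 < h θ})
    (hSne : S.Nonempty)
    (Jhat : ℝ → EuclideanSpace ℝ (Fin n) → ℝ)
    (hJhatdef : ∀ μ θ, Jhat μ θ = J θ - μ * Real.log (h θ))
    (hθsS : θs ∈ S) (hgθs : gradient h θs ≠ 0)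
    (μstar : ℝ) (hμstar : 0 < μstar)
    (θhat : ℝ → EuclideanSpace ℝ (Fin n))
    (hC1 : ContDiffOn ℝ 1 θhat (Set.Ico 0 μstar))
    (h0 : θhat 0 = θs)
    (hmem : ∀ μ ∈ Set.Ioo 0 μstar, θhat μ ∈ S)
    (hcrit : ∀ μ ∈ Set.Ioo 0 μstar, gradient (Jhat μ) (θhat μ) = 0) :
    ∃ μss, 0 < μss ∧ μss ≤ μstar ∧ ∀ μ ∈ Set.Ioo 0 μss, h θs < h (θhat μ) :=
  barrier_pushes_equilibrium_inward_general Jstar θs H Hpos J hJdef h hh S hSdef Jhat hJhatdef hθsS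
    hgθs μstar hμstar θhat hC1 h0 hmem hcrit
end

section
/- Pointwise repulsion estimate near the boundary: Fix k > 0 and μ > 0. Let m := min{‖∇h(θ)‖ : θ ∈ ∂S} and let c₀ > 0 be such that ‖∇h(θ)‖ ≥ m/2 for all θ in the closure of S with h(θ) ≤ c₀. Define M_h := max{‖∇h(θ)‖ : θ ∈ cl(S), h(θ) ≤ c₀}, M_J := max{‖H(θ − θ*)‖ : θ ∈ cl(S), h(θ) ≤ c₀}, and c₁ := min(c₀, μ·m²/(8·M_J·M_h)), assuming M_h > 0 and M_J > 0. Then for every θ ∈ S with h(θ) ≤ c₁, k·μ·‖∇h(θ)‖²/h(θ) − k·⟨H(θ − θ*), ∇h(θ)⟩ ≥ k·μ·m²/(8·h(θ)) > 0. -/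
open Real Set
open scoped RealInnerProductSpace

theorem pointwise_repulsion_near_boundary
    {n : ℕ} (hn : 1 ≤ n)
    (Jstar : ℝ) (θs : EuclideanSpace ℝ (Fin n))
    (H : EuclideanSpace ℝ (Fin n) →L[ℝ] EuclideanSpace ℝ (Fin n))
    (Hsymm : ∀ x y : EuclideanSpace ℝ (Fin n), ⟪H x, y⟫ = ⟪x, H y⟫)
    (Hpos : ∀ x : EuclideanSpace ℝ (Fin n), x ≠ 0 → 0 < ⟪x, H x⟫)
    (J : EuclideanSpace ℝ (Fin n) → ℝ)
    (hJdef : ∀ θ, J θ = Jstar + (1 / 2) * ⟪θ - θs, H (θ - θs)⟫)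
    (h : EuclideanSpace ℝ (Fin n) → ℝ) (hh : ContDiff ℝ 2 h)
    (S : Set (EuclideanSpace ℝ (Fin n))) (hSdef : S = {θ | 0 < h θ})
    (hSne : S.Nonempty)
    (hbdry : IsCompact (frontier S))
    (hgradne : ∀ θ ∈ frontier S, gradient h θ ≠ 0)
    (hsub : ∀ c : ℝ, IsCompact {θ | h θ ≤ c})
    (Jhat : ℝ → EuclideanSpace ℝ (Fin n) → ℝ)
    (hJhatdef : ∀ μ θ, Jhat μ θ = J θ - μ * Real.log (h θ))
    (k μ : ℝ) (hk : 0 < k) (hμ : 0 < μ)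
    (m : ℝ) (hm : IsLeast ((fun θ => ‖gradient h θ‖) '' frontier S) m)
    (c₀ : ℝ) (hc₀ : 0 < c₀)
    (hc₀m : ∀ θ ∈ closure S, h θ ≤ c₀ → m / 2 ≤ ‖gradient h θ‖)
    (Mh MJ : ℝ)
    (hMh : IsGreatest ((fun θ => ‖gradient h θ‖) '' {θ ∈ closure S | h θ ≤ c₀}) Mh)
    (hMJ : IsGreatest ((fun θ => ‖H (θ - θs)‖) '' {θ ∈ closure S | h θ ≤ c₀}) MJ)
    (hMh0 : 0 < Mh) (hMJ0 : 0 < MJ)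
    (c₁ : ℝ) (hc₁ : c₁ = min c₀ (μ * m ^ 2 / (8 * MJ * Mh)))
    :
    ∀ θ ∈ S, h θ ≤ c₁ →
      k * μ * m ^ 2 / (8 * h θ) ≤
          k * μ * ‖gradient h θ‖ ^ 2 / h θ - k * ⟪H (θ - θs), gradient h θ⟫ ∧
        0 < k * μ * m ^ 2 / (8 * h θ) := by
  intro θ hθS hθc₁
  have hθ0 : 0 < h θ := by rw [hSdef] at hθS; exact hθS
  have hθcl : θ ∈ closure S := subset_closure hθS
  have hc₁le : c₁ ≤ c₀ := hc₁ ▸ min_le_left _ _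
  have hc₁le2 : c₁ ≤ μ * m ^ 2 / (8 * MJ * Mh) := hc₁ ▸ min_le_right _ _
  have hθc₀ : h θ ≤ c₀ := le_trans hθc₁ hc₁le
  have hmem : θ ∈ {θ ∈ closure S | h θ ≤ c₀} := ⟨hθcl, hθc₀⟩
  have hgMh : ‖gradient h θ‖ ≤ Mh := hMh.2 ⟨θ, hmem, rfl⟩
  have hHMJ : ‖H (θ - θs)‖ ≤ MJ := hMJ.2 ⟨θ, hmem, rfl⟩
  have hm0 : 0 < m := by
    obtain ⟨θ₀, hθ₀, hθ₀e⟩ := hm.1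
    have h1 : 0 < ‖gradient h θ₀‖ := norm_pos_iff.mpr (hgradne θ₀ hθ₀)
    simpa [hθ₀e] using h1
  have hg2 : m / 2 ≤ ‖gradient h θ‖ := hc₀m θ hθcl hθc₀
  have hg2sq : m ^ 2 / 4 ≤ ‖gradient h θ‖ ^ 2 := by nlinarith
  have hip : ⟪H (θ - θs), gradient h θ⟫ ≤ MJ * Mh := by
    calc ⟪H (θ - θs), gradient h θ⟫ ≤ ‖H (θ - θs)‖ * ‖gradient h θ‖ :=
          real_inner_le_norm _ _
      _ ≤ MJ * Mh := by
          nlinarith [norm_nonneg (gradient h θ), norm_nonneg (H (θ - θs))]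
  have h1 : h θ * (8 * MJ * Mh) ≤ μ * m ^ 2 := by
    have h2 := le_trans hθc₁ hc₁le2
    rw [le_div_iff₀ (by positivity)] at h2
    linarith
  have hipA : ⟪H (θ - θs), gradient h θ⟫ * h θ ≤ MJ * Mh * h θ :=
    mul_le_mul_of_nonneg_right hip hθ0.le
  constructor
  · have hr : k * μ * ‖gradient h θ‖ ^ 2 / h θ - k * ⟪H (θ - θs), gradient h θ⟫ =
        (k * μ * ‖gradient h θ‖ ^ 2 - k * ⟪H (θ - θs), gradient h θ⟫ * h θ) / h θ := by
      field_simp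
    rw [hr, div_le_div_iff₀ (by linarith) hθ0]
    have t1 := mul_le_mul_of_nonneg_left (mul_le_mul_of_nonneg_right hipA hθ0.le) hk.le
    have t2 := mul_le_mul_of_nonneg_left (mul_le_mul_of_nonneg_right h1 hθ0.le) hk.le
    have t3 := mul_le_mul_of_nonneg_left (mul_le_mul_of_nonneg_right hg2sq hθ0.le)
      (mul_pos hk hμ).le
    nlinarith [t1, t2, t3]
  · exact div_pos (mul_pos (mul_pos hk hμ) (pow_pos hm0 2)) (by linarith)
end

section
/- Strict safety margin of the model-based gradient flow: Fix k > 0 and μ > 0. Let m := min{‖∇h(θ)‖ : θ ∈ ∂S}, let c₀ > 0 be such that ‖∇h(θ)‖ ≥ m/2 for all θ in the closure of S with h(θ) ≤ c₀, let M_h := max{‖∇h(θ)‖ : θ ∈ cl(S), h(θ) ≤ c₀} and M_J := max{‖H(θ − θ*)‖ : θ ∈ cl(S), h(θ) ≤ c₀} (assumed positive), and set c₁ := min(c₀, μ·m²/(8·M_J·M_h)). Then every differentiable curve ϑ : [t₀, T') → S satisfying ϑ'(t) = −k·∇Ĵ_μ(ϑ(t)) for all t and h(ϑ(t₀)) ≥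 c₁ satisfies h(ϑ(t)) ≥ c₁ for all t ∈ [t₀, T'). -/
open Real Set
open scoped RealInnerProductSpace

/-!
Along the flow, `d/dt h(ϑ) = k (μ/h ‖∇h‖² - ⟪∇h, H(ϑ - θ*)⟫)`. At the level `h = c₁ ≤ c₀` the
barrier term is at least `μ m² / (4 c₁) ≥ 2 M_J M_h`, which beats the cost term `≤ M_J M_h`.
So `h ∘ ϑ` is strictly increasing whenever it reaches `c₁` and can never drop below it.
-/

theorem le_of_hasDerivAt_pos_of_eq {g g' : ℝ → ℝ} {a b c : ℝ}
    (hg : ∀ t ∈ Ico a b, HasDerivAt g (g' t) t) (hpos : ∀ t ∈ Ico a b, g t = c → 0 < g' t)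
    (ha : c ≤ g a) : ∀ t ∈ Ico a b, c ≤ g t := by
  intro t ht
  have hsub : Icc a t ⊆ Ico a b := Icc_subset_Ico_right ht.2
  have hsub' : Ico a t ⊆ Ico a b := Ico_subset_Icc_self.trans hsub
  have key := image_le_of_deriv_right_lt_deriv_boundary (f := fun s => -g s)
    (f' := fun s => -g' s) (B := fun _ => -c) (B' := 0)
    (fun s hs => (hg s (hsub hs)).continuousAt.neg.continuousWithinAt)
    (fun s hs => (hg s (hsub' hs)).neg.hasDerivWithinAt) (neg_le_neg ha)
    (fun _ => hasDerivAt_const _ _)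
    (fun s hs hs_eq => neg_lt_zero.2 (hpos s (hsub' hs) (neg_inj.1 hs_eq)))
    ⟨ht.1, le_rfl⟩
  exact neg_le_neg_iff.1 key

variable {E : Type*} [NormedAddCommGroup E] [InnerProductSpace ℝ E]

theorem HasGradientAt.comp_hasDerivAt [CompleteSpace E] {f : E → ℝ} {f' : E} {γ : ℝ → E}
    {v : E} {t : ℝ} (hf : HasGradientAt f f' (γ t)) (hγ : HasDerivAt γ v t) :
    HasDerivAt (fun s => f (γ s)) ⟪f', v⟫ t :=
  (hf.hasFDerivAt.comp_hasDerivAt t hγ).congr_deriv (by simp)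

theorem real_inner_neg_smul_sub_smul_self (w a : E) (k r : ℝ) :
    ⟪w, -k • (a - r • w)⟫ = k * (r * ‖w‖ ^ 2 - ⟪w, a⟫) := by
  simp only [real_inner_smul_right, inner_sub_right, real_inner_self_eq_norm_sq]
  ring

theorem real_inner_lt_div_mul_norm_sq {w v : E} {μ x m Mw Mv : ℝ} (hx : 0 < x)
    (hxle : x ≤ μ * m ^ 2 / (8 * Mv * Mw)) (hm : 0 ≤ m) (hw : m / 2 ≤ ‖w‖)
    (hwM : ‖w‖ ≤ Mw) (hvM : ‖v‖ ≤ Mv) : ⟪w, v⟫ < μ / x * ‖w‖ ^ 2 := by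
  have hMw : 0 ≤ Mw := (norm_nonneg _).trans hwM
  have hMv : 0 ≤ Mv := (norm_nonneg _).trans hvM
  -- a zero denominator would turn `hxle` into `x ≤ 0`
  have hP : 0 < 8 * Mv * Mw := by
    refine lt_of_le_of_ne (by positivity) fun h0 => ?_
    rw [← h0, div_zero] at hxle
    linarith
  have hμm : 8 * Mv * Mw * x ≤ μ * m ^ 2 := by rwa [le_div_iff₀' hP] at hxle
  have hμ : 0 ≤ μ := by
    by_contra! hμ
    nlinarith [mul_nonpos_of_nonpos_of_nonneg hμ.le (sq_nonneg m), mul_pos hP hx]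
  calc ⟪w, v⟫ ≤ ‖w‖ * ‖v‖ := real_inner_le_norm w v
    _ ≤ Mw * Mv := mul_le_mul hwM hvM (norm_nonneg _) hMw
    _ < 2 * (Mw * Mv) := by nlinarith
    _ ≤ μ / x * (m / 2) ^ 2 := by
      rw [div_mul_eq_mul_div, le_div_iff₀ hx]
      linarith
    _ ≤ μ / x * ‖w‖ ^ 2 := by gcongr

theorem strict_safety_margin_of_model_based_flow_general
    {n : ℕ}
    (θs : EuclideanSpace ℝ (Fin n))
    (H : EuclideanSpace ℝ (Fin n) →L[ℝ] EuclideanSpace ℝ (Fin n))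
    (h : EuclideanSpace ℝ (Fin n) → ℝ) (hh : ContDiff ℝ 2 h)
    (S : Set (EuclideanSpace ℝ (Fin n))) (hSdef : S = {θ | 0 < h θ})
    (k μ : ℝ) (hk : 0 < k)
    (m : ℝ) (hm : IsLeast ((fun θ => ‖gradient h θ‖) '' frontier S) m)
    (c₀ : ℝ)
    (hc₀m : ∀ θ ∈ closure S, h θ ≤ c₀ → m / 2 ≤ ‖gradient h θ‖)
    (Mh MJ : ℝ)
    (hMh : IsGreatest ((fun θ => ‖gradient h θ‖) '' {θ ∈ closure S | h θ ≤ c₀}) Mh)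
    (hMJ : IsGreatest ((fun θ => ‖H (θ - θs)‖) '' {θ ∈ closure S | h θ ≤ c₀}) MJ)
    (c₁ : ℝ) (hc₁ : c₁ = min c₀ (μ * m ^ 2 / (8 * MJ * Mh)))
    (t₀ T' : ℝ) (ϑ : ℝ → EuclideanSpace ℝ (Fin n))
    (hmem : ∀ t ∈ Set.Ico t₀ T', ϑ t ∈ S)
    (hode : ∀ t ∈ Set.Ico t₀ T', HasDerivAt ϑ
        (-k • (H (ϑ t - θs) - (μ / h (ϑ t)) • gradient h (ϑ t))) t)
    (hinit : c₁ ≤ h (ϑ t₀)) :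
    ∀ t ∈ Set.Ico t₀ T', c₁ ≤ h (ϑ t) := by
  have hm0 : 0 ≤ m := by
    obtain ⟨θ, -, rfl⟩ := hm.1
    exact norm_nonneg _
  have hdiff : Differentiable ℝ h := hh.differentiable (by norm_num)
  refine le_of_hasDerivAt_pos_of_eq
    (fun t ht => (hdiff (ϑ t)).hasGradientAt.comp_hasDerivAt (hode t ht)) ?_ hinit
  intro t ht hlevel
  have hpos : 0 < h (ϑ t) := by
    have hS := hmem t ht
    rwa [hSdef] at hS
  have hcl : ϑ t ∈ closure S := subset_closure (hmem t ht)
  have hle₀ : h (ϑ t) ≤ c₀ := hlevel ▸ hc₁ ▸ min_le_left _ _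
  have hle₁ : h (ϑ t) ≤ μ * m ^ 2 / (8 * MJ * Mh) := hlevel ▸ hc₁ ▸ min_le_right _ _
  have hlt := real_inner_lt_div_mul_norm_sq hpos hle₁ hm0 (hc₀m _ hcl hle₀)
    (hMh.2 ⟨_, ⟨hcl, hle₀⟩, rfl⟩) (hMJ.2 ⟨_, ⟨hcl, hle₀⟩, rfl⟩)
  rw [real_inner_neg_smul_sub_smul_self]
  exact mul_pos hk (sub_pos.2 hlt)

theorem strict_safety_margin_of_model_based_flow
    {n : ℕ} (hn : 1 ≤ n)
    (Jstar : ℝ) (θs : EuclideanSpace ℝ (Fin n))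
    (H : EuclideanSpace ℝ (Fin n) →L[ℝ] EuclideanSpace ℝ (Fin n))
    (Hsymm : ∀ x y : EuclideanSpace ℝ (Fin n), ⟪H x, y⟫ = ⟪x, H y⟫)
    (Hpos : ∀ x : EuclideanSpace ℝ (Fin n), x ≠ 0 → 0 < ⟪x, H x⟫)
    (J : EuclideanSpace ℝ (Fin n) → ℝ)
    (hJdef : ∀ θ, J θ = Jstar + (1 / 2) * ⟪θ - θs, H (θ - θs)⟫)
    (h : EuclideanSpace ℝ (Fin n) → ℝ) (hh : ContDiff ℝ 2 h)
    (S : Set (EuclideanSpace ℝ (Fin n))) (hSdef : S = {θ | 0 < h θ})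
    (hSne : S.Nonempty)
    (hbdry : IsCompact (frontier S))
    (hgradne : ∀ θ ∈ frontier S, gradient h θ ≠ 0)
    (hsub : ∀ c : ℝ, IsCompact {θ | h θ ≤ c})
    (Jhat : ℝ → EuclideanSpace ℝ (Fin n) → ℝ)
    (hJhatdef : ∀ μ θ, Jhat μ θ = J θ - μ * Real.log (h θ))
    (k μ : ℝ) (hk : 0 < k) (hμ : 0 < μ)
    (m : ℝ) (hm : IsLeast ((fun θ => ‖gradient h θ‖) '' frontier S) m)
    (c₀ : ℝ) (hc₀ : 0 < c₀)
    (hc₀m : ∀ θ ∈ closure S, h θ ≤ c₀ → m / 2 ≤ ‖gradient h θ‖)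
    (Mh MJ : ℝ)
    (hMh : IsGreatest ((fun θ => ‖gradient h θ‖) '' {θ ∈ closure S | h θ ≤ c₀}) Mh)
    (hMJ : IsGreatest ((fun θ => ‖H (θ - θs)‖) '' {θ ∈ closure S | h θ ≤ c₀}) MJ)
    (hMh0 : 0 < Mh) (hMJ0 : 0 < MJ)
    (c₁ : ℝ) (hc₁ : c₁ = min c₀ (μ * m ^ 2 / (8 * MJ * Mh)))
    (t₀ T' : ℝ) (ϑ : ℝ → EuclideanSpace ℝ (Fin n))
    (hmem : ∀ t ∈ Set.Ico t₀ T', ϑ t ∈ S)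
    (hode : ∀ t ∈ Set.Ico t₀ T', HasDerivAt ϑ
        (-k • (H (ϑ t - θs) - (μ / h (ϑ t)) • gradient h (ϑ t))) t)
    (hinit : c₁ ≤ h (ϑ t₀)) :
    ∀ t ∈ Set.Ico t₀ T', c₁ ≤ h (ϑ t) :=
  strict_safety_margin_of_model_based_flow_general θs H h hh S hSdef k μ hk m hm c₀ hc₀m Mh MJ hMh
    hMJ c₁ hc₁ t₀ T' ϑ hmem hode hinit
end

section
/- Sublevel sets of the modified cost are bounded away from the safety boundary: For every μ > 0, every B ∈ ℝ, and every θ ∈ S, if Ĵ_μ(θ) ≤ B then h(θ) ≥ exp(−(B − J*)/μ) > 0. Consequently, for every compact set Θ₀ ⊂ S there exists h̲ > 0 such that every θ ∈ S with Ĵ_μ(θ) ≤ max{Ĵ_μ(θ') : θ' ∈ Θ₀} satisfies h(θ) ≥ h̲. -/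
open Real Set
open scoped RealInnerProductSpace

theorem sublevel_sets_bounded_away_from_boundary
    {n : ℕ} (hn : 1 ≤ n)
    (Jstar : ℝ) (θs : EuclideanSpace ℝ (Fin n))
    (H : EuclideanSpace ℝ (Fin n) →L[ℝ] EuclideanSpace ℝ (Fin n))
    (Hsymm : ∀ x y : EuclideanSpace ℝ (Fin n), ⟪H x, y⟫ = ⟪x, H y⟫)
    (Hpos : ∀ x : EuclideanSpace ℝ (Fin n), x ≠ 0 → 0 < ⟪x, H x⟫)
    (J : EuclideanSpace ℝ (Fin n) → ℝ)
    (hJdef : ∀ θ, J θ = Jstar + (1 / 2) * ⟪θ - θs, H (θ - θs)⟫)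
    (h : EuclideanSpace ℝ (Fin n) → ℝ) (hh : Continuous h)
    (S : Set (EuclideanSpace ℝ (Fin n))) (hSdef : S = {θ | 0 < h θ})
    (hSne : S.Nonempty)
    (Jhat : ℝ → EuclideanSpace ℝ (Fin n) → ℝ)
    (hJhatdef : ∀ μ θ, Jhat μ θ = J θ - μ * Real.log (h θ))
    (μ : ℝ) (hμ : 0 < μ) :
    (∀ B : ℝ, ∀ θ ∈ S, Jhat μ θ ≤ B →
        Real.exp (-(B - Jstar) / μ) ≤ h θ ∧ 0 < Real.exp (-(B - Jstar) / μ)) ∧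
      ∀ Θ₀ : Set (EuclideanSpace ℝ (Fin n)), IsCompact Θ₀ → Θ₀ ⊆ S → Θ₀.Nonempty →
        ∃ hbar > 0, ∀ θ ∈ S, Jhat μ θ ≤ sSup (Jhat μ '' Θ₀) → hbar ≤ h θ := by
  have key : ∀ B : ℝ, ∀ θ ∈ S, Jhat μ θ ≤ B →
      Real.exp (-(B - Jstar) / μ) ≤ h θ ∧ 0 < Real.exp (-(B - Jstar) / μ) := by
    intro B θ hθ hle
    have hθpos : 0 < h θ := by rw [hSdef] at hθ; exact hθ
    have hJge : Jstar ≤ J θ := by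
      rw [hJdef]
      rcases eq_or_ne (θ - θs) 0 with h0 | h0
      · simp [h0]
      · nlinarith [Hpos (θ - θs) h0]
    have hlog : -(B - Jstar) / μ ≤ Real.log (h θ) := by
      rw [hJhatdef] at hle
      rw [div_le_iff₀ hμ]
      nlinarith
    refine ⟨?_, Real.exp_pos _⟩
    calc Real.exp (-(B - Jstar) / μ) ≤ Real.exp (Real.log (h θ)) :=
          Real.exp_le_exp.mpr hlog
      _ = h θ := Real.exp_log hθpos
  refine ⟨key, fun Θ₀ _ _ _ => ?_⟩
  exact ⟨Real.exp (-(sSup (Jhat μ '' Θ₀) - Jstar) / μ), Real.exp_pos _,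
    fun θ hθ hle => (key _ θ hθ hle).1⟩
end

section
/- Uniform convergence of the averaged gradient estimate: Fix μ > 0 and define the averaged gradient estimate ḡ(θ, a) := (1/T)·∫₀ᵀ m(τ, a)·Ĵ_μ(θ + a·s(τ)) dτ for θ ∈ S and a > 0 small enough that θ + a·s(τ) ∈ S for all τ ∈ [0, T]. Then for every compact set K ⊂ S and every ε > 0 there exists a* > 0 such that for all a ∈ (0, a*): θ + a·s(τ) ∈ S for every θ ∈ K and τ ∈ [0, T], and ‖ḡ(θ, a) − ∇Ĵ_μ(θ)‖ ≤ ε for every θ ∈ K. -/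
/-!
Uniformly for θ in a compact subset of the open set S, the mean value inequality and the uniform
continuity of the derivative near K give Ĵ(θ + a s) = Ĵ(θ) + a ⟪∇Ĵ(θ), s⟫ + o(a). Demodulating
with m (the paper's m(τ, a) with the factor 1/a taken out) and averaging over a period, the
constant term vanishes because ∫ m = 0, and the linear term returns T ∇Ĵ(θ) because the
orthogonality of sines with distinct frequencies gives ∫ ⟪g, s⟫ m = T g for every g; the
remainder contributes o(a)/a.
-/

open Real Set MeasureTheory
open scoped RealInnerProductSpace

theorem integral_sin_mul_of_mul_eq_two_pi_mul {c T : ℝ} (hc : ∃ z : ℤ, c * T = 2 * π * z) :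
    ∫ τ in (0 : ℝ)..T, sin (c * τ) = 0 := by
  obtain ⟨z, hz⟩ := hc
  rcases eq_or_ne c 0 with rfl | hc₀
  · simp
  · have hcos : cos (c * T) = 1 := by
      rw [hz, mul_comm]; exact cos_int_mul_two_pi z
    rw [intervalIntegral.integral_comp_mul_left (fun x => sin x) hc₀, integral_sin, hcos]
    simp

theorem integral_cos_mul_of_mul_eq_two_pi_mul {c T : ℝ} (hc₀ : c ≠ 0)
    (hc : ∃ z : ℤ, c * T = 2 * π * z) :
    ∫ τ in (0 : ℝ)..T, cos (c * τ) = 0 := by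
  obtain ⟨z, hz⟩ := hc
  have hsin : sin (c * T) = 0 := by
    rw [hz, show 2 * π * (z : ℝ) = (2 * z : ℤ) * π by push_cast; ring]; exact sin_int_mul_pi _
  rw [intervalIntegral.integral_comp_mul_left (fun x => cos x) hc₀, integral_cos, hsin]
  simp

theorem integral_sin_mul_mul_sin_mul_of_mul_eq_two_pi_mul {b c T : ℝ} (hb : 0 < b) (hc : 0 < c)
    (hbT : ∃ z : ℤ, b * T = 2 * π * z) (hcT : ∃ z : ℤ, c * T = 2 * π * z) :
    ∫ τ in (0 : ℝ)..T, sin (b * τ) * sin (c * τ) = if b = c then T / 2 else 0 := by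
  obtain ⟨k, hk⟩ := hbT
  obtain ⟨l, hl⟩ := hcT
  have hprod : ∀ τ, sin (b * τ) * sin (c * τ) = (cos ((b - c) * τ) - cos ((b + c) * τ)) / 2 := by
    intro τ
    rw [sub_mul, add_mul, ← two_mul_sin_mul_sin]
    ring
  have hsum : ∫ τ in (0 : ℝ)..T, cos ((b + c) * τ) = 0 :=
    integral_cos_mul_of_mul_eq_two_pi_mul (by positivity)
      ⟨k + l, by push_cast; linear_combination hk + hl⟩
  simp_rw [hprod]
  rw [intervalIntegral.integral_div, intervalIntegral.integral_sub
    (Continuous.intervalIntegrable (by fun_prop) _ _)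
    (Continuous.intervalIntegrable (by fun_prop) _ _), hsum]
  split_ifs with hbc
  · simp [hbc]
  · rw [integral_cos_mul_of_mul_eq_two_pi_mul (sub_ne_zero.2 hbc)
      ⟨k - l, by push_cast; linear_combination hk - hl⟩]
    simp

theorem EuclideanSpace.intervalIntegral_apply {ι : Type*} [Fintype ι]
    {F : ℝ → EuclideanSpace ℝ ι} {a b : ℝ} (hF : IntervalIntegrable F volume a b) (i : ι) :
    (∫ τ in a..b, F τ) i = ∫ τ in a..b, F τ i :=
  ((EuclideanSpace.proj i).intervalIntegral_comp_comm hF).symm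

section SineVector

variable {ι : Type*}

noncomputable def sineVector (c ω : ι → ℝ) (τ : ℝ) : EuclideanSpace ℝ ι :=
  WithLp.toLp 2 fun i => c i * sin (ω i * τ)

@[simp]
theorem sineVector_apply (c ω : ι → ℝ) (τ : ℝ) (i : ι) :
    sineVector c ω τ i = c i * sin (ω i * τ) := rfl

@[fun_prop]
theorem continuous_sineVector (c ω : ι → ℝ) : Continuous (sineVector c ω) :=
  (PiLp.continuous_toLp 2 _).comp (by fun_prop)

variable [Fintype ι] {ω : ι → ℝ} {T : ℝ}

theorem integral_sineVector (c : ι → ℝ) (hω : ∀ i, ∃ z : ℤ, ω i * T = 2 * π * z) :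
    ∫ τ in (0 : ℝ)..T, sineVector c ω τ = 0 := by
  ext i
  rw [EuclideanSpace.intervalIntegral_apply (Continuous.intervalIntegrable (by fun_prop) _ _)]
  simp [intervalIntegral.integral_const_mul, integral_sin_mul_of_mul_eq_two_pi_mul (hω i)]

theorem integral_inner_sineVector_smul_sineVector {r : ι → ℝ} (hr : ∀ i, r i ≠ 0)
    (hω₀ : ∀ i, 0 < ω i) (hω : Function.Injective ω) (hωT : ∀ i, ∃ z : ℤ, ω i * T = 2 * π * z)
    (g : EuclideanSpace ℝ ι) :
    ∫ τ in (0 : ℝ)..T, ⟪g, sineVector r ω τ⟫ • sineVector (fun i => 2 / r i) ω τ = T • g := by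
  classical
  ext i
  rw [EuclideanSpace.intervalIntegral_apply (Continuous.intervalIntegrable (by fun_prop) _ _)]
  have hexpand : ∀ τ, (⟪g, sineVector r ω τ⟫ • sineVector (fun i => 2 / r i) ω τ) i
      = ∑ j, (g j * r j * (2 / r i)) * (sin (ω j * τ) * sin (ω i * τ)) := by
    intro τ
    simp only [PiLp.smul_apply, smul_eq_mul, sineVector_apply, PiLp.inner_apply,
      RCLike.inner_apply, conj_trivial, Finset.sum_mul]
    exact Finset.sum_congr rfl fun j _ => by ring
  simp_rw [hexpand]
  rw [intervalIntegral.integral_finsetSum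
    fun j _ => Continuous.intervalIntegrable (by fun_prop) _ _]
  simp_rw [intervalIntegral.integral_const_mul,
    integral_sin_mul_mul_sin_mul_of_mul_eq_two_pi_mul (hω₀ _) (hω₀ i) (hωT _) (hωT i), hω.eq_iff]
  simp only [mul_ite, mul_zero, Finset.sum_ite_eq', Finset.mem_univ, if_true, PiLp.smul_apply,
    smul_eq_mul]
  field_simp [hr i]

end SineVector

theorem IsCompact.exists_forall_norm_sub_sub_fderiv_le
    {E F : Type*} [NormedAddCommGroup E] [NormedSpace ℝ E] [NormedAddCommGroup F]
    [NormedSpace ℝ F] {f : E → F} {U K : Set E} (hU : IsOpen U) (hf : ContDiffOn ℝ 1 f U)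
    (hK : IsCompact K) (hKU : K ⊆ U) {ε : ℝ} (hε : 0 < ε) :
    ∃ δ > 0, ∀ θ ∈ K, ∀ v : E, ‖v‖ ≤ δ →
      θ + v ∈ U ∧ ‖f (θ + v) - f θ - fderiv ℝ f θ v‖ ≤ ε * ‖v‖ := by
  obtain ⟨δ₀, hδ₀, hK₀U⟩ := hK.exists_cthickening_subset_open hU hKU
  have hD : ∀ θ ∈ K, ContinuousAt (fderiv ℝ f) θ := fun θ hθ =>
    (hf.continuousOn_fderiv_of_isOpen hU le_rfl).continuousAt (hU.mem_nhds (hKU hθ))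
  obtain ⟨δ₁, hδ₁, hDδ₁⟩ := Metric.mem_uniformity_dist.1
    (hK.uniformContinuousAt_of_continuousAt _ hD (Metric.dist_mem_uniformity hε))
  refine ⟨min δ₀ (δ₁ / 2), by positivity, fun θ hθ v hv => ?_⟩
  have hball : Metric.closedBall θ ‖v‖ ⊆ U :=
    (Metric.closedBall_subset_cthickening hθ _).trans
      ((Metric.cthickening_mono (hv.trans (min_le_left _ _)) K).trans hK₀U)
  have hθv : θ + v ∈ Metric.closedBall θ ‖v‖ := by simp
  have hderiv : ∀ z ∈ Metric.closedBall θ ‖v‖, ‖fderiv ℝ f z - fderiv ℝ f θ‖ ≤ ε := by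
    intro z hz
    have hzθ : dist θ z < δ₁ := by
      linarith [Metric.mem_closedBall'.1 hz, min_le_right δ₀ (δ₁ / 2)]
    rw [← dist_eq_norm, dist_comm]
    exact (hDδ₁ hzθ hθ).le
  refine ⟨hball hθv, ?_⟩
  simpa using (convex_closedBall θ ‖v‖).norm_image_sub_le_of_norm_fderiv_le'
    (fun z hz => (hf.contDiffAt (hU.mem_nhds (hball hz))).differentiableAt one_ne_zero)
    hderiv (Metric.mem_closedBall_self (norm_nonneg v)) hθv

theorem norm_one_div_smul_intervalIntegral_le {E : Type*} [NormedAddCommGroup E]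
    [NormedSpace ℝ E] {g : ℝ → E} {T C : ℝ} (hT : 0 < T) (hg : ∀ τ ∈ uIoc 0 T, ‖g τ‖ ≤ C) :
    ‖(1 / T) • ∫ τ in (0 : ℝ)..T, g τ‖ ≤ C := by
  rw [norm_smul, Real.norm_of_nonneg (by positivity)]
  calc 1 / T * ‖∫ τ in (0 : ℝ)..T, g τ‖ ≤ 1 / T * (C * |T - 0|) := by
        gcongr
        exact intervalIntegral.norm_integral_le_of_norm_le_const hg
    _ = C := by
        rw [sub_zero, abs_of_pos hT]
        field_simp

section Averaging

variable {E : Type*} [NormedAddCommGroup E] [InnerProductSpace ℝ E] [CompleteSpace E]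

noncomputable def averagedGradient (f : E → ℝ) (s m : ℝ → E) (T a : ℝ) (θ : E) : E :=
  (1 / T) • ∫ τ in (0 : ℝ)..T, f (θ + a • s τ) • (a⁻¹ • m τ)

variable {s m : ℝ → E} {T : ℝ}

theorem averagedGradient_sub_gradient (hs : Continuous s) (hm : Continuous m)
    (hm₀ : ∫ τ in (0 : ℝ)..T, m τ = 0) (hsm : ∀ g, ∫ τ in (0 : ℝ)..T, ⟪g, s τ⟫ • m τ = T • g)
    (hT : T ≠ 0) {f : E → ℝ} {a : ℝ} (ha : a ≠ 0) {θ : E}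
    (hfm : IntervalIntegrable (fun τ => f (θ + a • s τ) • m τ) volume 0 T) :
    averagedGradient f s m T a θ - gradient f θ = (1 / T) • ∫ τ in (0 : ℝ)..T,
      (a⁻¹ * (f (θ + a • s τ) - f θ - fderiv ℝ f θ (a • s τ))) • m τ := by
  have hpoint : ∀ τ, (a⁻¹ * (f (θ + a • s τ) - f θ - fderiv ℝ f θ (a • s τ))) • m τ
      = (f (θ + a • s τ) • (a⁻¹ • m τ) - (a⁻¹ * f θ) • m τ) - ⟪gradient f θ, s τ⟫ • m τ := by
    intro τ
    rw [inner_gradient_left, map_smul, smul_eq_mul]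
    simp only [smul_smul, ← sub_smul]
    field_simp
  have hfm' : IntervalIntegrable (fun τ => f (θ + a • s τ) • (a⁻¹ • m τ)) volume 0 T := by
    refine (hfm.smul a⁻¹).congr fun τ _ => ?_
    simp only [Pi.smul_apply, smul_comm a⁻¹]
  have hm' : IntervalIntegrable (fun τ => (a⁻¹ * f θ) • m τ) volume 0 T :=
    (hm.intervalIntegrable _ _).smul _
  have hsm' : IntervalIntegrable (fun τ => ⟪gradient f θ, s τ⟫ • m τ) volume 0 T :=
    ((continuous_const.inner hs).smul hm).intervalIntegrable _ _
  simp_rw [hpoint]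
  rw [intervalIntegral.integral_sub (hfm'.sub hm') hsm', intervalIntegral.integral_sub hfm' hm',
    intervalIntegral.integral_smul, hm₀, hsm, smul_zero, sub_zero, smul_sub, smul_smul,
    one_div_mul_cancel hT, one_smul, averagedGradient]

theorem IsCompact.exists_forall_norm_averagedGradient_sub_gradient_le {f : E → ℝ} {U K : Set E}
    (hU : IsOpen U) (hf : ContDiffOn ℝ 1 f U) (hK : IsCompact K) (hKU : K ⊆ U)
    (hs : Continuous s) (hm : Continuous m) (hm₀ : ∫ τ in (0 : ℝ)..T, m τ = 0)
    (hsm : ∀ g, ∫ τ in (0 : ℝ)..T, ⟪g, s τ⟫ • m τ = T • g) (hT : 0 < T) {ε : ℝ} (hε : 0 < ε) :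
    ∃ a₀ > 0, ∀ a ∈ Ioo 0 a₀, (∀ θ ∈ K, ∀ τ ∈ Icc 0 T, θ + a • s τ ∈ U) ∧
      ∀ θ ∈ K, ‖averagedGradient f s m T a θ - gradient f θ‖ ≤ ε := by
  obtain ⟨R, hR⟩ := isCompact_Icc.exists_bound_of_continuousOn hs.continuousOn
  obtain ⟨M, hM⟩ := isCompact_Icc.exists_bound_of_continuousOn hm.continuousOn
  have h0T : (0 : ℝ) ∈ Icc 0 T := ⟨le_rfl, hT.le⟩
  have hR₀ : 0 ≤ R := (norm_nonneg _).trans (hR 0 h0T)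
  have hM₀ : 0 ≤ M := (norm_nonneg _).trans (hM 0 h0T)
  set ε' := ε / (R * M + 1)
  have hεRM : ε' * R * M ≤ ε := by
    rw [mul_assoc, div_mul_eq_mul_div, div_le_iff₀ (by positivity)]
    nlinarith
  obtain ⟨δ, hδ, htaylor⟩ :=
    hK.exists_forall_norm_sub_sub_fderiv_le hU hf hKU (by positivity : 0 < ε')
  refine ⟨δ / (R + 1), by positivity, fun a ⟨ha₀, ha⟩ => ?_⟩
  have hstep : ∀ τ ∈ Icc 0 T, ‖a • s τ‖ ≤ a * R := fun τ hτ => by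
    rw [norm_smul, Real.norm_of_nonneg ha₀.le]
    exact mul_le_mul_of_nonneg_left (hR τ hτ) ha₀.le
  have haR : a * R ≤ δ := by
    rw [lt_div_iff₀ (by positivity)] at ha
    nlinarith
  have hsafe : ∀ θ ∈ K, ∀ τ ∈ Icc 0 T, θ + a • s τ ∈ U := fun θ hθ τ hτ =>
    (htaylor θ hθ _ ((hstep τ hτ).trans haR)).1
  refine ⟨hsafe, fun θ hθ => ?_⟩
  have hfm : IntervalIntegrable (fun τ => f (θ + a • s τ) • m τ) volume 0 T := by
    refine ContinuousOn.intervalIntegrable ?_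
    rw [uIcc_of_le hT.le]
    exact (hf.continuousOn.comp (by fun_prop) (hsafe θ hθ)).smul hm.continuousOn
  rw [averagedGradient_sub_gradient hs hm hm₀ hsm hT.ne' ha₀.ne' hfm]
  have hbound : ∀ τ ∈ uIoc 0 T,
      ‖(a⁻¹ * (f (θ + a • s τ) - f θ - fderiv ℝ f θ (a • s τ))) • m τ‖ ≤ ε' * R * M := by
    intro τ hτ
    have hτ' : τ ∈ Icc 0 T := by
      rw [uIoc_of_le hT.le] at hτ
      exact Ioc_subset_Icc_self hτ
    rw [norm_smul, norm_mul, norm_inv, Real.norm_of_nonneg ha₀.le]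
    calc a⁻¹ * ‖f (θ + a • s τ) - f θ - fderiv ℝ f θ (a • s τ)‖ * ‖m τ‖
        ≤ a⁻¹ * (ε' * (a * R)) * M := by
          gcongr
          · exact (htaylor θ hθ _ ((hstep τ hτ').trans haR)).2.trans
              (mul_le_mul_of_nonneg_left (hstep τ hτ') (by positivity))
          · exact hM τ hτ'
      _ = ε' * R * M := by field_simp
  exact (norm_one_div_smul_intervalIntegral_le hT hbound).trans hεRM

end Averaging

theorem uniform_convergence_of_averaged_gradient_general
    {n : ℕ}
    (Jstar : ℝ) (θs : EuclideanSpace ℝ (Fin n))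
    (H : EuclideanSpace ℝ (Fin n) →L[ℝ] EuclideanSpace ℝ (Fin n))
    (J : EuclideanSpace ℝ (Fin n) → ℝ)
    (hJdef : ∀ θ, J θ = Jstar + (1 / 2) * ⟪θ - θs, H (θ - θs)⟫)
    (h : EuclideanSpace ℝ (Fin n) → ℝ) (hh : ContDiff ℝ 2 h)
    (S : Set (EuclideanSpace ℝ (Fin n))) (hSdef : S = {θ | 0 < h θ})
    (Jhat : ℝ → EuclideanSpace ℝ (Fin n) → ℝ)
    (hJhatdef : ∀ μ θ, Jhat μ θ = J θ - μ * Real.log (h θ))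
    (r : Fin n → ℝ) (hr : ∀ i, 0 < r i)
    (ω' : Fin n → ℚ) (hω'pos : ∀ i, 0 < ω' i)
    (hω'dist : ∀ i j : Fin n, i ≠ j → ω' i ≠ ω' j)
    (T : ℝ) (hT : 0 < T)
    (hper : ∀ i, ∃ z : ℤ, (ω' i : ℝ) * T = 2 * Real.pi * z)
    (sd : ℝ → EuclideanSpace ℝ (Fin n))
    (hsd : ∀ τ i, sd τ i = r i * Real.sin ((ω' i : ℝ) * τ))
    (md : ℝ → ℝ → EuclideanSpace ℝ (Fin n))
    (hmd : ∀ a τ i, md a τ i = (2 / (a * r i)) * Real.sin ((ω' i : ℝ) * τ))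
    (μ : ℝ) :
    ∀ K : Set (EuclideanSpace ℝ (Fin n)), IsCompact K → K ⊆ S →
      ∀ ε > 0, ∃ astar > 0, ∀ a ∈ Set.Ioo 0 astar,
        (∀ θ ∈ K, ∀ τ ∈ Set.Icc (0:ℝ) T, θ + a • sd τ ∈ S) ∧
        ∀ θ ∈ K,
          ‖(1 / T) • (∫ τ in (0:ℝ)..T, Jhat μ (θ + a • sd τ) • md a τ)
              - gradient (Jhat μ) θ‖ ≤ ε := by
  intro K hK hKS ε hε
  subst hSdef
  have hω₀ : ∀ i, (0 : ℝ) < ω' i := fun i => by exact_mod_cast hω'pos i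
  have hω : Function.Injective fun i => (ω' i : ℝ) := fun i j hij =>
    by_contra fun hne => hω'dist i j hne (Rat.cast_injective hij)
  have hsd' : sd = sineVector r fun i => (ω' i : ℝ) := funext fun τ => by ext i; simp [hsd]
  have hmd' : ∀ a τ, md a τ = a⁻¹ • sineVector (fun i => 2 / r i) (fun i => (ω' i : ℝ)) τ := by
    intro a τ
    ext i
    simp only [hmd, PiLp.smul_apply, sineVector_apply, smul_eq_mul]
    ring
  have hJhat : ContDiffOn ℝ 1 (Jhat μ) {θ | 0 < h θ} := by
    have hJ : ContDiff ℝ 1 J := by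
      rw [funext hJdef]
      exact contDiff_const.add (contDiff_const.mul ((contDiff_id.sub contDiff_const).inner ℝ
        (H.contDiff.comp (contDiff_id.sub contDiff_const))))
    have hlog : ContDiffOn ℝ 1 (fun θ => log (h θ)) {θ | 0 < h θ} :=
      (hh.of_le (by norm_num)).contDiffOn.log fun θ hθ => hθ.ne'
    rw [funext (hJhatdef μ)]
    exact hJ.contDiffOn.sub (contDiffOn_const.mul hlog)
  obtain ⟨a₀, ha₀, hconv⟩ := hK.exists_forall_norm_averagedGradient_sub_gradient_le
    (isOpen_lt continuous_const hh.continuous) hJhat hKS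
    (continuous_sineVector _ _) (continuous_sineVector _ _) (integral_sineVector _ hper)
    (integral_inner_sineVector_smul_sineVector (fun i => (hr i).ne') hω₀ hω hper) hT hε
  subst hsd'
  simp_rw [hmd']
  exact ⟨a₀, ha₀, hconv⟩

theorem uniform_convergence_of_averaged_gradient
    {n : ℕ} (hn : 1 ≤ n)
    (Jstar : ℝ) (θs : EuclideanSpace ℝ (Fin n))
    (H : EuclideanSpace ℝ (Fin n) →L[ℝ] EuclideanSpace ℝ (Fin n))
    (Hsymm : ∀ x y : EuclideanSpace ℝ (Fin n), ⟪H x, y⟫ = ⟪x, H y⟫)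
    (Hpos : ∀ x : EuclideanSpace ℝ (Fin n), x ≠ 0 → 0 < ⟪x, H x⟫)
    (J : EuclideanSpace ℝ (Fin n) → ℝ)
    (hJdef : ∀ θ, J θ = Jstar + (1 / 2) * ⟪θ - θs, H (θ - θs)⟫)
    (h : EuclideanSpace ℝ (Fin n) → ℝ) (hh : ContDiff ℝ 2 h)
    (S : Set (EuclideanSpace ℝ (Fin n))) (hSdef : S = {θ | 0 < h θ})
    (hSne : S.Nonempty)
    (Jhat : ℝ → EuclideanSpace ℝ (Fin n) → ℝ)
    (hJhatdef : ∀ μ θ, Jhat μ θ = J θ - μ * Real.log (h θ))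
    (r : Fin n → ℝ) (hr : ∀ i, 0 < r i)
    (ω' : Fin n → ℚ) (hω'pos : ∀ i, 0 < ω' i)
    (hω'dist : ∀ i j : Fin n, i ≠ j → ω' i ≠ ω' j)
    (hω'sum : ∀ i j k : Fin n, i ≠ j → j ≠ k → i ≠ k → ω' i + ω' j ≠ ω' k)
    (T : ℝ) (hT : 0 < T)
    (hper : ∀ i, ∃ z : ℤ, (ω' i : ℝ) * T = 2 * Real.pi * z)
    (sd : ℝ → EuclideanSpace ℝ (Fin n))
    (hsd : ∀ τ i, sd τ i = r i * Real.sin ((ω' i : ℝ) * τ))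
    (md : ℝ → ℝ → EuclideanSpace ℝ (Fin n))
    (hmd : ∀ a τ i, md a τ i = (2 / (a * r i)) * Real.sin ((ω' i : ℝ) * τ))
    (μ : ℝ) (hμ : 0 < μ) :
    ∀ K : Set (EuclideanSpace ℝ (Fin n)), IsCompact K → K ⊆ S →
      ∀ ε > 0, ∃ astar > 0, ∀ a ∈ Set.Ioo 0 astar,
        (∀ θ ∈ K, ∀ τ ∈ Set.Icc (0:ℝ) T, θ + a • sd τ ∈ S) ∧
        ∀ θ ∈ K,
          ‖(1 / T) • (∫ τ in (0:ℝ)..T, Jhat μ (θ + a • sd τ) • md a τ)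
              - gradient (Jhat μ) θ‖ ≤ ε :=
  uniform_convergence_of_averaged_gradient_general Jstar θs H J hJdef h hh S hSdef Jhat hJhatdef r
    hr ω' hω'pos hω'dist T hT hper sd hsd md hmd μ
end
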